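/- Fix 0 < C < 7/9 and let L ⊂ (0,∞)^n be the set of points r with some coordinate r_i in (1/3, 2/3) and all coordinates r_j > 1/3. Then for all sufficiently large b (uniformly in θ ∈ T^n), Q^b[2](r,θ) = ∑ k_i(θ)(r_i − 2)² + b∑_{p≠q}(r_p − r_q)² > 1 + C for all r ∈ L. -/

import Mathlib

/-!
Pick a coordinate `rᵢ ∈ (1/3, 2/3)`, so that `(rᵢ - 2)² > 16/9`. Since `∑ kⱼ = 1`, the first sum
of `Q^b[2]` equals `(rᵢ - 2)² + ∑ⱼ kⱼ((rⱼ - 2)² - (rᵢ - 2)²)`, and each cross term is linear-plus-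
quadratic in `rⱼ - rᵢ` with coefficients bounded uniformly in `θ` (the `kⱼ` are continuous on the
compact torus). The coupling term `b (rⱼ - rᵢ)²` absorbs it up to an arbitrarily small `δ` once `b`
is large, leaving `Q^b[2] > 16/9 - nδ ≥ 1 + C`.
-/

noncomputable section

/-- The `n`-torus `T^n`. -/
abbrev Torus (n : ℕ) : Type := Fin n → AddCircle (1 : ℝ)

/-- `Q^b[2](r,θ) = ∑ᵢ kᵢ(θ)(rᵢ − 2)² + b ∑_{p≠q} (r_p − r_q)²`. -/
def Qb2 (n : ℕ) (k : Fin n → Torus n → ℝ) (b : ℝ)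
    (r : Fin n → ℝ) (θ : Torus n) : ℝ :=
  ∑ i, k i θ * (r i - 2) ^ 2 +
    b * ∑ p, ∑ q, if p ≠ q then (r p - r q) ^ 2 else 0

open Finset

lemma neg_le_mul_sq_sub_mul_abs {A δ b : ℝ} (d : ℝ) (hδ : 0 < δ) (hb : A ^ 2 / (4 * δ) ≤ b) :
    -δ ≤ b * d ^ 2 - A * |d| := by
  have hsq : A ^ 2 / (4 * δ) * d ^ 2 - A * |d| + δ = (A * |d| - 2 * δ) ^ 2 / (4 * δ) := by
    rw [← sq_abs d]
    field_simp
    ring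
  have hpos : 0 ≤ (A * |d| - 2 * δ) ^ 2 / (4 * δ) := by positivity
  nlinarith [mul_le_mul_of_nonneg_right hb (sq_nonneg d)]

/-- The cross term `c((x-2)² - (y-2)²) = c d (d + 2(y-2))`, `d = x - y`, is at least
`-M d² - 2KM|d|`, which a coupling coefficient `b ≥ M + K²M²/δ` absorbs up to `δ`. -/
lemma neg_le_cross_add_coupling {M K δ b c x y : ℝ} (hc : |c| ≤ M) (hy : |y - 2| ≤ K)
    (hδ : 0 < δ) (hb : M + K ^ 2 * M ^ 2 / δ ≤ b) :
    -δ ≤ c * ((x - 2) ^ 2 - (y - 2) ^ 2) + b * (x - y) ^ 2 := by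
  set d := x - y
  have hM : 0 ≤ M := (abs_nonneg c).trans hc
  have hcross : -(M * d ^ 2 + 2 * K * M * |d|) ≤ c * ((x - 2) ^ 2 - (y - 2) ^ 2) := by
    have hfactor : c * ((x - 2) ^ 2 - (y - 2) ^ 2) = c * d * (d + 2 * (y - 2)) := by ring
    have hlin : |d + 2 * (y - 2)| ≤ |d| + 2 * K := by
      calc |d + 2 * (y - 2)| ≤ |d| + |2 * (y - 2)| := abs_add_le _ _
        _ ≤ |d| + 2 * K := by rw [abs_mul, abs_two]; linarith
    have habs : |c * d * (d + 2 * (y - 2))| ≤ M * d ^ 2 + 2 * K * M * |d| := by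
      rw [abs_mul, abs_mul]
      calc |c| * |d| * |d + 2 * (y - 2)| ≤ M * |d| * (|d| + 2 * K) := by gcongr
        _ = M * d ^ 2 + 2 * K * M * |d| := by rw [← sq_abs d]; ring
    rw [hfactor]
    exact (abs_le.mp habs).1
  have hquad : -δ ≤ (b - M) * d ^ 2 - 2 * K * M * |d| :=
    neg_le_mul_sq_sub_mul_abs d hδ (by
      calc (2 * K * M) ^ 2 / (4 * δ) = K ^ 2 * M ^ 2 / δ := by field_simp; ring
        _ ≤ b - M := by linarith)
  nlinarith

lemma sum_sq_sub_le_sum_sum_sq_sub {n : ℕ} (r : Fin n → ℝ) (i : Fin n) :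
    ∑ p, (r p - r i) ^ 2 ≤ ∑ p, ∑ q, if p ≠ q then (r p - r q) ^ 2 else 0 := by
  refine sum_le_sum fun p _ => ?_
  have hnonneg : ∀ q ∈ univ, 0 ≤ if p ≠ q then (r p - r q) ^ 2 else 0 :=
    fun q _ => by positivity
  by_cases hpi : p = i
  · simpa [hpi] using sum_nonneg hnonneg
  · simpa [hpi] using single_le_sum hnonneg (mem_univ i)

lemma add_sum_le_Qb2 {n : ℕ} {k : Fin n → Torus n → ℝ} {θ : Torus n} (hsum : ∑ j, k j θ = 1)
    {b : ℝ} (hb : 0 ≤ b) (r : Fin n → ℝ) (i : Fin n) :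
    (r i - 2) ^ 2 + ∑ j, (k j θ * ((r j - 2) ^ 2 - (r i - 2) ^ 2) + b * (r j - r i) ^ 2) ≤
      Qb2 n k b r θ := by
  have hrecenter : ∑ j, k j θ * (r j - 2) ^ 2 =
      (r i - 2) ^ 2 + ∑ j, k j θ * ((r j - 2) ^ 2 - (r i - 2) ^ 2) := by
    simp only [mul_sub, sum_sub_distrib, ← sum_mul, hsum, one_mul, add_sub_cancel]
  have hcoupling := mul_le_mul_of_nonneg_left (sum_sq_sub_le_sum_sum_sq_sub r i) hb
  rw [Qb2, hrecenter, sum_add_distrib, ← mul_sum]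
  linarith

lemma exists_forall_abs_le_of_continuous {ι X : Type*} [Fintype ι] [TopologicalSpace X]
    [CompactSpace X] {f : ι → X → ℝ} (hf : ∀ i, Continuous (f i)) :
    ∃ M, ∀ i x, |f i x| ≤ M := by
  obtain ⟨M, hM⟩ :=
    isCompact_univ.exists_bound_of_continuousOn (continuous_pi hf).continuousOn
  exact ⟨M, fun i x => (norm_le_pi_norm (fun j => f j x) i).trans (hM x (Set.mem_univ x))⟩

theorem Qb2_large_on_L_general (n : ℕ)
    (k : Fin n → Torus n → ℝ) (hk : ∀ i, Continuous (k i))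
    (hsum : ∀ θ, ∑ i, k i θ = 1)
    (C : ℝ) (hC : C < 7 / 9) :
    ∃ b₀ : ℝ, ∀ b ≥ b₀, ∀ θ : Torus n, ∀ r : Fin n → ℝ,
      (∀ j, 1 / 3 < r j) → (∃ i, r i < 2 / 3) →
      1 + C < Qb2 n k b r θ := by
  obtain ⟨M, hM⟩ := exists_forall_abs_le_of_continuous hk
  set δ := (7 / 9 - C) / (n + 1)
  have hδ : 0 < δ := by positivity
  have hnδ : n * δ ≤ 7 / 9 - C := by
    rw [mul_div_assoc', div_le_iff₀ (by positivity)]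
    nlinarith
  refine ⟨M + (5 / 3) ^ 2 * M ^ 2 / δ, fun b hb θ r hr ⟨i, hi⟩ => ?_⟩
  have hb0 : 0 ≤ b := le_trans (add_nonneg ((abs_nonneg _).trans (hM i θ)) (by positivity)) hb
  have hri : |r i - 2| ≤ 5 / 3 := abs_le.mpr ⟨by linarith [hr i], by linarith⟩
  have hterms : n • (-δ) ≤
      ∑ j, (k j θ * ((r j - 2) ^ 2 - (r i - 2) ^ 2) + b * (r j - r i) ^ 2) := by
    simpa using card_nsmul_le_sum univ _ (-δ) fun j _ =>
      neg_le_cross_add_coupling (hM j θ) hri hδ hb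
  have hfar : 16 / 9 < (r i - 2) ^ 2 := by nlinarith [hr i]
  have := add_sum_le_Qb2 (hsum θ) hb0 r i
  rw [nsmul_eq_mul] at hterms
  linarith

/-- Fix `0 < C < 7/9` and let `L` be the set of `r ∈ (0,∞)^n` with all
coordinates `> 1/3` and some coordinate in `(1/3, 2/3)`. Then for all
sufficiently large `b`, uniformly in `θ ∈ T^n`, `Q^b[2] > 1 + C` on `L`. -/
theorem Qb2_large_on_L (n : ℕ) (hn : 0 < n)
    (k : Fin n → Torus n → ℝ) (hk : ∀ i, Continuous (k i))
    (hsum : ∀ θ, ∑ i, k i θ = 1)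
    (C : ℝ) (hC0 : 0 < C) (hC : C < 7 / 9) :
    ∃ b₀ : ℝ, ∀ b ≥ b₀, ∀ θ : Torus n, ∀ r : Fin n → ℝ,
      (∀ j, 1 / 3 < r j) → (∃ i, r i < 2 / 3) →
      1 + C < Qb2 n k b r θ :=
  Qb2_large_on_L_general n k hk hsum C hC
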